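/- Let λ be a regular uncountable cardinal, E ⊆ λ a club, β a limit ordinal, e ⊆ β a club in β with e ∩ S = ∅ for a given set S. Then the set c = {α < β : ∃ζ ∈ e, α = sup(ζ ∩ E)} satisfies: every element of c ∩ S is a non-accumulation point of c. -/

import Mathlib

/-!
If `α ∈ c` were a limit of `c`, then `α = sup (α ∩ E)`, since every `γ ∈ c` below `α` has the form
`sup (ζ ∩ E)` and is then at most `sup (α ∩ E)`. Hence each such `γ = sup (ζ ∩ E)` comes from some
`ζ ∈ e` with `γ ≤ ζ < α`, so `e` is unbounded in `α`. As `e` is closed, `α ∈ e`, contradicting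
`e ∩ S = ∅`.
-/

open Ordinal Set Cardinal

/-- Accumulation points of a set of ordinals: `α ≠ 0` with `sup (C ∩ α) = α`. -/
def accS (C : Set Ordinal) : Set Ordinal := {α | α ≠ 0 ∧ sSup (C ∩ Set.Iio α) = α}

/-- Non-accumulation points. -/
def naccS (C : Set Ordinal) : Set Ordinal := C \ accS C

/-- `C` is a club (closed unbounded set) in the ordinal `lam`. -/
def IsClubIn (C : Set Ordinal) (lam : Ordinal) : Prop :=
  C ⊆ Set.Iio lam ∧
  (∀ α < lam, α ≠ 0 → sSup (C ∩ Set.Iio α) = α → α ∈ C) ∧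
  (∀ α < lam, ∃ β ∈ C, α < β)

/-- `S` is stationary in `lam`: it meets every club of `lam`. -/
def IsStatIn (S : Set Ordinal) (lam : Ordinal) : Prop :=
  ∀ C : Set Ordinal, IsClubIn C lam → (S ∩ C).Nonempty

/-- The paper's `sup (ζ ∩ E)`. -/
noncomputable def supBelow (E : Set Ordinal) (ζ : Ordinal) : Ordinal := sSup (E ∩ Iio ζ)

section supBelow

variable {E : Set Ordinal}

lemma bddAbove_inter_Iio (E : Set Ordinal) (ζ : Ordinal) : BddAbove (E ∩ Iio ζ) :=
  bddAbove_Iio.mono inter_subset_right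

lemma supBelow_le (E : Set Ordinal) (ζ : Ordinal) : supBelow E ζ ≤ ζ :=
  csSup_le' fun _ hx => hx.2.le

lemma le_supBelow {ζ ε : Ordinal} (hε : ε ∈ E) (hεζ : ε < ζ) : ε ≤ supBelow E ζ :=
  le_csSup (bddAbove_inter_Iio E ζ) ⟨hε, hεζ⟩

lemma supBelow_mono (E : Set Ordinal) : Monotone (supBelow E) := fun _ ζ' h =>
  csSup_le_csSup' (bddAbove_inter_Iio E ζ') (inter_subset_inter_right _ (Iio_subset_Iio h))

lemma supBelow_le_supBelow_of_supBelow_lt {ζ α : Ordinal} (h : supBelow E ζ < α) :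
    supBelow E ζ ≤ supBelow E α :=
  csSup_le' fun _ hε => le_supBelow hε.1 ((le_supBelow hε.1 hε.2).trans_lt h)

end supBelow

section accS

variable {C : Set Ordinal} {α : Ordinal}

lemma exists_mem_Ioo_of_mem_accS (hα : α ∈ accS C) {δ : Ordinal} (hδ : δ < α) :
    ∃ γ ∈ C, δ < γ ∧ γ < α := by
  rw [← hα.2] at hδ
  obtain ⟨γ, ⟨hγC, hγα⟩, hδγ⟩ := exists_lt_of_lt_csSup' hδ
  exact ⟨γ, hγC, hδγ, hγα⟩

lemma mem_accS_of_exists_mem_Ioo (hα : α ≠ 0) (h : ∀ δ < α, ∃ γ ∈ C, δ < γ ∧ γ < α) :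
    α ∈ accS C := by
  refine ⟨hα, le_antisymm (supBelow_le C α) (le_of_forall_lt fun δ hδ => ?_)⟩
  obtain ⟨γ, hγC, hδγ, hγα⟩ := h δ hδ
  exact hδγ.trans_le (le_supBelow hγC hγα)

lemma IsClubIn.mem_of_mem_accS {β : Ordinal} (hC : IsClubIn C β) (hα : α ∈ accS C)
    (hαβ : α < β) : α ∈ C :=
  hC.2.1 α hαβ hα.1 hα.2

end accS

section projection

variable {E e c : Set Ordinal} {α : Ordinal}

lemma supBelow_eq_self_of_mem_accS (hc : c ⊆ supBelow E '' e) (hα : α ∈ accS c) :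
    supBelow E α = α := by
  refine le_antisymm (supBelow_le E α) (le_of_forall_lt fun δ hδ => ?_)
  obtain ⟨γ, hγc, hδγ, hγα⟩ := exists_mem_Ioo_of_mem_accS hα hδ
  obtain ⟨ζ, -, rfl⟩ := hc hγc
  exact hδγ.trans_le (supBelow_le_supBelow_of_supBelow_lt hγα)

lemma mem_accS_of_subset_image_supBelow (hc : c ⊆ supBelow E '' e) (hα : α ∈ accS c) :
    α ∈ accS e := by
  refine mem_accS_of_exists_mem_Ioo hα.1 fun δ hδ => ?_
  obtain ⟨γ, hγc, hδγ, hγα⟩ := exists_mem_Ioo_of_mem_accS hα hδ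
  obtain ⟨ζ, hζe, rfl⟩ := hc hγc
  refine ⟨ζ, hζe, hδγ.trans_le (supBelow_le E ζ), lt_of_not_ge fun hαζ => ?_⟩
  have hle := supBelow_mono E hαζ
  rw [supBelow_eq_self_of_mem_accS hc hα] at hle
  exact hγα.not_ge hle

end projection

theorem stmt18_general
    (E : Set Ordinal)
    (β : Ordinal)
    (e : Set Ordinal) (he : IsClubIn e β)
    (S : Set Ordinal) (heS : e ∩ S = ∅)
    (c : Set Ordinal)
    (hc : c = {α | α < β ∧ ∃ ζ ∈ e, α = sSup (E ∩ Set.Iio ζ)}) :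
    ∀ α ∈ c ∩ S, α ∈ naccS c := by
  rintro α ⟨hαc, hαS⟩
  refine ⟨hαc, fun hαacc => ?_⟩
  have hc_sub : c ⊆ supBelow E '' e := by
    rw [hc]
    rintro γ ⟨-, ζ, hζe, rfl⟩
    exact ⟨ζ, hζe, rfl⟩
  have hαβ : α < β := by
    rw [hc] at hαc
    exact hαc.1
  have hαe : α ∈ e := he.mem_of_mem_accS (mem_accS_of_subset_image_supBelow hc_sub hαacc) hαβ
  exact eq_empty_iff_forall_notMem.mp heS α ⟨hαe, hαS⟩

/-- Key use of non-reflection, Lemma 3.1(4): if e ∩ S = ∅ then every point of S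
in the set of E-projections of e is a non-accumulation point of that set. -/
theorem stmt18 (lam : Cardinal) (hreg : lam.IsRegular) (hunc : Cardinal.aleph0 < lam)
    (E : Set Ordinal) (hE : IsClubIn E lam.ord)
    (β : Ordinal) (hβ : β < lam.ord) (hβlim : Order.IsSuccLimit β)
    (e : Set Ordinal) (he : IsClubIn e β)
    (S : Set Ordinal) (heS : e ∩ S = ∅)
    (c : Set Ordinal)
    (hc : c = {α | α < β ∧ ∃ ζ ∈ e, α = sSup (E ∩ Set.Iio ζ)}) :
    ∀ α ∈ c ∩ S, α ∈ naccS c :=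
  stmt18_general E β e he S heS c hc
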